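/- arXiv:1412.3633 — 2 statements merged into one kernel-verified Lean document; each statement's English description precedes it below -/
import Mathlib

section
/- For every theory Σ and every attribute implication A ⇒ B annotated by time points, the following three conditions are equivalent: (1) Σ ⊨ A ⇒ B; (2) [A]_Σ ⊨ A ⇒ B; (3) B ⊆ [A]_Σ. -/
namespace TAI

variable {Y : Type*}

/-- Time shift of a set of time-annotated attributes: `M + j`. -/
def shiftS (M : Set (Y × ℤ)) (j : ℤ) : Set (Y × ℤ) :=
  (fun p : Y × ℤ => (p.1, p.2 + j)) '' M

/-- Time shift of a finite set of time-annotated attributes: `A + j`. -/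
def shiftF [DecidableEq Y] (A : Finset (Y × ℤ)) (j : ℤ) : Finset (Y × ℤ) :=
  A.image (fun p => (p.1, p.2 + j))

/-- An attribute implication over `Y` annotated by time points: a pair
`(A, B)` of finite subsets of `T_Y = Y × ℤ`, read as `A ⇒ B`. -/
abbrev Fml (Y : Type*) := Finset (Y × ℤ) × Finset (Y × ℤ)

/-- `A ⇒ B` is true in `M ⊆ T_Y`: for every `i ∈ ℤ`, `A + i ⊆ M` implies `B + i ⊆ M`. -/
def Holds [DecidableEq Y] (M : Set (Y × ℤ)) (φ : Fml Y) : Prop :=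
  ∀ i : ℤ, ↑(shiftF φ.1 i) ⊆ M → ↑(shiftF φ.2 i) ⊆ M

/-- The models of a theory `T`. -/
def Mods [DecidableEq Y] (T : Set (Fml Y)) : Set (Set (Y × ℤ)) :=
  {M | ∀ φ ∈ T, Holds M φ}

/-- Semantic entailment: `T ⊨ φ`. -/
def Entails [DecidableEq Y] (T : Set (Fml Y)) (φ : Fml Y) : Prop :=
  ∀ M ∈ Mods T, Holds M φ

/-- Semantic closure `[M]_Σ`. -/
def semClos [DecidableEq Y] (T : Set (Fml Y)) (M : Set (Y × ℤ)) : Set (Y × ℤ) :=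
  ⋂₀ {N | N ∈ Mods T ∧ M ⊆ N}

/-- Classical (time-point-free) truth: `M ⊨_PL A ⇒ B` iff `A ⊆ M` implies `B ⊆ M`. -/
def HoldsPL (M : Set (Y × ℤ)) (φ : Fml Y) : Prop :=
  ↑φ.1 ⊆ M → ↑φ.2 ⊆ M

/-- Classical models. -/
def ModsPL (T : Set (Fml Y)) : Set (Set (Y × ℤ)) :=
  {M | ∀ φ ∈ T, HoldsPL M φ}

/-- Classical semantic entailment `⊨_PL`. -/
def EntailsPL (T : Set (Fml Y)) (φ : Fml Y) : Prop :=
  ∀ M ∈ ModsPL T, HoldsPL M φ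

/-- `Σ^PL = {A + i ⇒ B + i | A ⇒ B ∈ Σ, i ∈ ℤ}`. -/
def shiftAll [DecidableEq Y] (T : Set (Fml Y)) : Set (Fml Y) :=
  {ψ | ∃ φ ∈ T, ∃ i : ℤ, ψ = (shiftF φ.1 i, shiftF φ.2 i)}

/-- One step of the syntactic closure construction. -/
def synStep [DecidableEq Y] (T : Set (Fml Y)) (M : Set (Y × ℤ)) : Set (Y × ℤ) :=
  M ∪ ⋃₀ {S | ∃ φ ∈ T, ∃ i : ℤ, ↑(shiftF φ.1 i) ⊆ M ∧ S = (↑(shiftF φ.2 i) : Set (Y × ℤ))}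

/-- `M_Σ^n`. -/
def synIter [DecidableEq Y] (T : Set (Fml Y)) (M : Set (Y × ℤ)) : ℕ → Set (Y × ℤ)
  | 0 => M
  | n + 1 => synStep T (synIter T M n)

/-- The syntactic closure `M_Σ^ω`. -/
def synClos [DecidableEq Y] (T : Set (Fml Y)) (M : Set (Y × ℤ)) : Set (Y × ℤ) :=
  ⋃ n : ℕ, synIter T M n

/-- Provability from `T` using the rules (Ax), (Cut) and (Shf). -/
inductive Prov [DecidableEq Y] (T : Set (Fml Y)) : Fml Y → Prop
  | hyp {φ : Fml Y} : φ ∈ T → Prov T φ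
  | ax (A B : Finset (Y × ℤ)) : Prov T (A ∪ B, A)
  | cut {A B C D : Finset (Y × ℤ)} :
      Prov T (A, B) → Prov T (B ∪ C, D) → Prov T (A ∪ C, D)
  | shf {A B : Finset (Y × ℤ)} (i : ℤ) :
      Prov T (A, B) → Prov T (shiftF A i, shiftF B i)

/-- Provability from `T` using only the rules (Ax) and (Cut) (no time shifts). -/
inductive ProvAC [DecidableEq Y] (T : Set (Fml Y)) : Fml Y → Prop
  | hyp {φ : Fml Y} : φ ∈ T → ProvAC T φ
  | ax (A B : Finset (Y × ℤ)) : ProvAC T (A ∪ B, A)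
  | cut {A B C D : Finset (Y × ℤ)} :
      ProvAC T (A, B) → ProvAC T (B ∪ C, D) → ProvAC T (A ∪ C, D)

/-- Provability from `T` using the rules (Ax) and (Cut_i). -/
inductive ProvCuti [DecidableEq Y] (T : Set (Fml Y)) : Fml Y → Prop
  | hyp {φ : Fml Y} : φ ∈ T → ProvCuti T φ
  | ax (A B : Finset (Y × ℤ)) : ProvCuti T (A ∪ B, A)
  | cuti {A B C D : Finset (Y × ℤ)} (i : ℤ) :
      ProvCuti T (A, shiftF B i) → ProvCuti T (B ∪ C, D) →
      ProvCuti T (A ∪ shiftF C i, shiftF D i)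

/-- Provability from `T` using the rules (Ref) and (Sim_i). -/
inductive ProvRS [DecidableEq Y] (T : Set (Fml Y)) : Fml Y → Prop
  | hyp {φ : Fml Y} : φ ∈ T → ProvRS T φ
  | ref (A : Finset (Y × ℤ)) : ProvRS T (A, A)
  | simi {A B C D : Finset (Y × ℤ)} (i : ℤ) :
      ProvRS T (A, shiftF B i) → ProvRS T (C, D) →
      ProvRS T (A ∪ shiftF (C \ B) i, shiftF D i)

/-- The closure operator induced by a closure system `S`. -/
def closOp (S : Set (Set (Y × ℤ))) (M : Set (Y × ℤ)) : Set (Y × ℤ) :=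
  ⋂₀ {N | N ∈ S ∧ M ⊆ N}

/-- The least time point occurring in a finite set (`0` for the empty set). -/
def lo (A : Finset (Y × ℤ)) : ℤ :=
  WithTop.untopD 0 (A.image Prod.snd).min

/-- The greatest time point occurring in a finite set (`0` for the empty set). -/
def hi (A : Finset (Y × ℤ)) : ℤ :=
  WithBot.unbotD 0 (A.image Prod.snd).max

/-- A formula `A ⇒ B` is predictive if `A ≠ ∅`, `B ≠ ∅`, and every time point in
`A` is less than or equal to every time point in `B`. -/
def Predictive (φ : Fml Y) : Prop :=
  φ.1.Nonempty ∧ φ.2.Nonempty ∧ ∀ p ∈ φ.1, ∀ q ∈ φ.2, p.2 ≤ q.2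

/-! The models of `Σ` are closed under time shifts, so `[A]_Σ` is the least model containing `A`
and every model `M` with `A + i ⊆ M` also contains `[A]_Σ + i`; hence `B ⊆ [A]_Σ` suffices. -/

lemma coe_shiftF [DecidableEq Y] (A : Finset (Y × ℤ)) (i : ℤ) :
    (↑(shiftF A i) : Set (Y × ℤ)) = shiftS ↑A i := by
  simp [shiftF, shiftS]

lemma shiftS_shiftS (M : Set (Y × ℤ)) (i j : ℤ) :
    shiftS (shiftS M i) j = shiftS M (i + j) := by
  simp only [shiftS, Set.image_image, add_assoc]

@[simp]
lemma shiftS_zero (M : Set (Y × ℤ)) : shiftS M 0 = M := by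
  simp [shiftS]

lemma shiftS_mono {M N : Set (Y × ℤ)} (h : M ⊆ N) (i : ℤ) : shiftS M i ⊆ shiftS N i :=
  Set.image_mono h

lemma shiftS_subset_iff {M N : Set (Y × ℤ)} (i : ℤ) :
    shiftS M i ⊆ N ↔ M ⊆ shiftS N (-i) :=
  ⟨fun h => by simpa [shiftS_shiftS] using shiftS_mono h (-i),
    fun h => by simpa [shiftS_shiftS] using shiftS_mono h i⟩

lemma holds_iff [DecidableEq Y] {M : Set (Y × ℤ)} {φ : Fml Y} :
    Holds M φ ↔ ∀ k : ℤ, ↑φ.1 ⊆ shiftS M k → ↑φ.2 ⊆ shiftS M k := by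
  simp only [Holds, coe_shiftF, shiftS_subset_iff]
  exact ⟨fun h k => by simpa using h (-k), fun h i => h (-i)⟩

lemma Holds.shiftS [DecidableEq Y] {M : Set (Y × ℤ)} {φ : Fml Y} (h : Holds M φ) (j : ℤ) :
    Holds (shiftS M j) φ := by
  rw [holds_iff] at h ⊢
  simpa only [shiftS_shiftS] using fun k => h (j + k)

lemma shiftS_mem_mods [DecidableEq Y] {T : Set (Fml Y)} {M : Set (Y × ℤ)} (hM : M ∈ Mods T)
    (j : ℤ) : shiftS M j ∈ Mods T :=
  fun φ hφ => (hM φ hφ).shiftS j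

lemma subset_semClos [DecidableEq Y] (T : Set (Fml Y)) (M : Set (Y × ℤ)) :
    M ⊆ semClos T M :=
  Set.subset_sInter fun _ hN => hN.2

lemma semClos_subset [DecidableEq Y] {T : Set (Fml Y)} {M N : Set (Y × ℤ)}
    (hN : N ∈ Mods T) (hMN : M ⊆ N) : semClos T M ⊆ N :=
  Set.sInter_subset_of_mem ⟨hN, hMN⟩

lemma semClos_mem_mods [DecidableEq Y] (T : Set (Fml Y)) (M : Set (Y × ℤ)) :
    semClos T M ∈ Mods T := by
  intro φ hφ i hA
  exact Set.subset_sInter fun N hN =>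
    hN.1 φ hφ i (hA.trans (semClos_subset hN.1 hN.2))

lemma entails_of_subset_semClos [DecidableEq Y] {T : Set (Fml Y)} {A B : Finset (Y × ℤ)}
    (hB : ↑B ⊆ semClos T ↑A) : Entails T (A, B) := fun _ hM =>
  holds_iff.2 fun k hA => hB.trans (semClos_subset (shiftS_mem_mods hM k) hA)

theorem entails_iff_semClos_general [DecidableEq Y]
    (T : Set (Fml Y)) (A B : Finset (Y × ℤ)) :
    (Entails T (A, B) ↔ Holds (semClos T ↑A) (A, B)) ∧
    (Entails T (A, B) ↔ ↑B ⊆ semClos T ↑A) := by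
  have holds_to_subset (h : Holds (semClos T ↑A) (A, B)) : ↑B ⊆ semClos T ↑A := by
    simpa using holds_iff.1 h 0 (by simpa using subset_semClos T ↑A)
  have entails_to_holds (h : Entails T (A, B)) : Holds (semClos T ↑A) (A, B) :=
    h _ (semClos_mem_mods T ↑A)
  exact ⟨⟨entails_to_holds, fun h => entails_of_subset_semClos (holds_to_subset h)⟩,
    ⟨fun h => holds_to_subset (entails_to_holds h), entails_of_subset_semClos⟩⟩

/-- `Σ ⊨ A ⇒ B` iff `[A]_Σ ⊨ A ⇒ B` iff `B ⊆ [A]_Σ`. -/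
theorem entails_iff_semClos [DecidableEq Y] [Fintype Y] [Nonempty Y]
    (T : Set (Fml Y)) (A B : Finset (Y × ℤ)) :
    (Entails T (A, B) ↔ Holds (semClos T ↑A) (A, B)) ∧
    (Entails T (A, B) ↔ ↑B ⊆ semClos T ↑A) :=
  entails_iff_semClos_general T A B

end TAI
end

section
/- (Completeness) For every theory Σ and every attribute implication A ⇒ B annotated by time points, Σ ⊢ A ⇒ B if and only if Σ ⊨ A ⇒ B. -/
/-!
Given `A`, take the canonical model `{p | Σ ⊢ A ⇒ {p}}`: it contains `A` by (Ax), and it is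
a model of `Σ` because every `C ⇒ D ∈ Σ` can be shifted by (Shf) and chained after
`A ⇒ C + i` by (Cut). If `Σ ⊨ A ⇒ B`, this model therefore contains `B`, which means
`Σ ⊢ A ⇒ B`.
-/

namespace TAI

variable {Y : Type*}

section

variable [DecidableEq Y]

lemma shiftF_union (A B : Finset (Y × ℤ)) (i : ℤ) :
    shiftF (A ∪ B) i = shiftF A i ∪ shiftF B i :=
  Finset.image_union _ _

lemma shiftF_shiftF (A : Finset (Y × ℤ)) (i j : ℤ) :
    shiftF (shiftF A i) j = shiftF A (i + j) := by
  simp only [shiftF, Finset.image_image]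
  congr 1
  ext p <;> simp [add_assoc]

@[simp]
lemma shiftF_zero (A : Finset (Y × ℤ)) : shiftF A 0 = A := by
  simp [shiftF]

lemma Holds.subset {M : Set (Y × ℤ)} {φ : Fml Y} (h : Holds M φ) (h₁ : ↑φ.1 ⊆ M) :
    ↑φ.2 ⊆ M := by
  simpa using h 0 (by simpa using h₁)

namespace Prov

variable {T : Set (Fml Y)}

lemma of_subset {A B : Finset (Y × ℤ)} (h : B ⊆ A) : Prov T (A, B) := by
  simpa [Finset.union_eq_right.mpr h] using Prov.ax (T := T) B A

lemma trans {A B C : Finset (Y × ℤ)} (h₁ : Prov T (A, B)) (h₂ : Prov T (B, C)) :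
    Prov T (A, C) := by
  simpa using Prov.cut h₁ (C := ∅) (by simpa using h₂)

lemma union_right {A B C : Finset (Y × ℤ)} (hB : Prov T (A, B)) (hC : Prov T (A, C)) :
    Prov T (A, B ∪ C) := by
  have hAC : Prov T (C ∪ A, B ∪ C) := by
    rw [Finset.union_comm]
    exact Prov.cut hB (of_subset subset_rfl)
  simpa using Prov.cut hC hAC

lemma iff_forall_singleton {A B : Finset (Y × ℤ)} :
    Prov T (A, B) ↔ ∀ p ∈ B, Prov T (A, {p}) := by
  refine ⟨fun h p hp => h.trans (of_subset (Finset.singleton_subset_iff.mpr hp)), fun h => ?_⟩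
  induction B using Finset.induction_on with
  | empty => exact of_subset (Finset.empty_subset A)
  | insert p B _ ih =>
    rw [Finset.insert_eq]
    exact union_right (h p (Finset.mem_insert_self p B))
      (ih fun q hq => h q (Finset.mem_insert_of_mem hq))

theorem entails {φ : Fml Y} (h : Prov T φ) : Entails T φ := by
  induction h with
  | hyp hφ => exact fun M hM => hM _ hφ
  | ax A B =>
    intro M _ i hAB
    rw [shiftF_union, Finset.coe_union, Set.union_subset_iff] at hAB
    exact hAB.1
  | @cut A B C D _ _ ihAB ihBCD =>
    intro M hM i hAC
    rw [shiftF_union, Finset.coe_union, Set.union_subset_iff] at hAC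
    refine ihBCD M hM i ?_
    rw [shiftF_union, Finset.coe_union, Set.union_subset_iff]
    exact ⟨ihAB M hM i hAC.1, hAC.2⟩
  | shf i _ ih =>
    intro M hM j hA
    rw [shiftF_shiftF] at hA ⊢
    exact ih M hM (i + j) hA

end Prov

def canonicalModel (T : Set (Fml Y)) (A : Finset (Y × ℤ)) : Set (Y × ℤ) :=
  {p | Prov T (A, {p})}

variable {T : Set (Fml Y)}

lemma coe_subset_canonicalModel_iff {A B : Finset (Y × ℤ)} :
    ↑B ⊆ canonicalModel T A ↔ Prov T (A, B) := by
  rw [Prov.iff_forall_singleton]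
  rfl

lemma canonicalModel_mem_mods (A : Finset (Y × ℤ)) : canonicalModel T A ∈ Mods T := by
  intro φ hφ i hC
  rw [coe_subset_canonicalModel_iff] at hC ⊢
  exact hC.trans (Prov.shf i (Prov.hyp hφ))

end

theorem completeness_general [DecidableEq Y]
    (T : Set (Fml Y)) (A B : Finset (Y × ℤ)) :
    Prov T (A, B) ↔ Entails T (A, B) := by
  refine ⟨Prov.entails, fun hent => ?_⟩
  rw [← coe_subset_canonicalModel_iff]
  exact (hent _ (canonicalModel_mem_mods A)).subset
    (coe_subset_canonicalModel_iff.mpr (Prov.of_subset subset_rfl))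

/-- Completeness: `Σ ⊢ A ⇒ B` iff `Σ ⊨ A ⇒ B`. -/
theorem completeness [DecidableEq Y] [Fintype Y] [Nonempty Y]
    (T : Set (Fml Y)) (A B : Finset (Y × ℤ)) :
    Prov T (A, B) ↔ Entails T (A, B) :=
  completeness_general T A B

end TAI
end
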